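/- For probability mass functions ρ, ρ_E on a finite type X, the quantity sup_{D: X → (0,1)} Σ_x [ρ(x)·log D(x) + ρ_E(x)·log(1 - D(x))] equals 2·JSD(ρ, ρ_E) - 2·log 2, where JSD(ρ, ρ_E) = (1/2)·KL(ρ ‖ m) + (1/2)·KL(ρ_E ‖ m) with m = (ρ + ρ_E)/2 is the Jensen–Shannon divergence and KL(p ‖ q) = Σ_x p(x)·log(p(x)/q(x)). -/

import Mathlib

open Finset Filter Topology

/-- Kullback–Leibler divergence between finitely supported mass functions. -/
noncomputable def klDiv' {X : Type*} [Fintype X] (p q : X → ℝ) : ℝ :=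
  ∑ x, p x * Real.log (p x / q x)

/-- Jensen–Shannon divergence. -/
noncomputable def jsDiv {X : Type*} [Fintype X] (p q : X → ℝ) : ℝ :=
  (1 / 2) * klDiv' p (fun x => (p x + q x) / 2) +
  (1 / 2) * klDiv' q (fun x => (p x + q x) / 2)

/-! The optimal discriminator is `D x = ρ x / (ρ x + ρE x)`: by `log y ≤ y - 1` no `D` beats it
coordinatewise, and although it may take the values `0` or `1`, the admissible discriminators
`(ρ x + t) / (ρ x + ρE x + 2 t)` approach its value as `t → 0⁺`. At that optimum the objective is
`∑ ρ log (ρ / (ρ + ρE)) + ρE log (ρE / (ρ + ρE))`, which is `2 JSD - 2 log 2` because the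
mixture `m = (ρ + ρE) / 2` differs from `ρ + ρE` by the factor `2` and `ρ`, `ρE` have mass `1`. -/

namespace Real

lemma mul_log_le_mul_log_div_add {a c t : ℝ} (ha : 0 ≤ a) (hc : 0 < c) (ht : 0 < t) :
    a * log t ≤ a * log (a / c) + (c * t - a) := by
  rcases ha.eq_or_lt with rfl | ha
  · simpa using (mul_pos hc ht).le
  have key : log (c * t / a) ≤ c * t / a - 1 := log_le_sub_one_of_pos (by positivity)
  have hlog : log (c * t / a) = log t - log (a / c) := by
    rw [log_div (by positivity) ha.ne', log_mul hc.ne' ht.ne', log_div ha.ne' hc.ne']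
    ring
  have := mul_le_mul_of_nonneg_left key ha.le
  rw [hlog, mul_sub, mul_sub, mul_div_cancel₀ _ ha.ne', mul_one] at this
  linarith

lemma mul_log_add_mul_log_one_sub_le {a b t : ℝ} (ha : 0 ≤ a) (hb : 0 ≤ b)
    (ht : t ∈ Set.Ioo (0 : ℝ) 1) :
    a * log t + b * log (1 - t) ≤ a * log (a / (a + b)) + b * log (b / (a + b)) := by
  rcases (add_nonneg ha hb).eq_or_lt with hab | hab
  · obtain ⟨rfl, rfl⟩ : a = 0 ∧ b = 0 := (add_eq_zero_iff_of_nonneg ha hb).mp hab.symm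
    simp
  have h₁ := mul_log_le_mul_log_div_add ha hab ht.1
  have h₂ := mul_log_le_mul_log_div_add hb hab (sub_pos.mpr ht.2)
  linarith

lemma continuousAt_mul_log_add_div {a b : ℝ} (ha : 0 ≤ a) (hb : 0 ≤ b) :
    ContinuousAt (fun t => a * log ((a + t) / (a + b + 2 * t))) 0 := by
  rcases ha.eq_or_lt with rfl | ha
  · simpa using continuousAt_const
  refine continuousAt_const.mul ((ContinuousAt.div (by fun_prop) (by fun_prop) ?_).log ?_) <;>
    simp only [Pi.div_apply, mul_zero, add_zero] <;> positivity

end Real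

open Real

lemma sSup_sum_mul_log_add_mul_log_one_sub {X : Type*} [Fintype X] (a b : X → ℝ)
    (ha : ∀ x, 0 ≤ a x) (hb : ∀ x, 0 ≤ b x) :
    sSup {v : ℝ | ∃ D : X → ℝ, (∀ x, D x ∈ Set.Ioo (0 : ℝ) 1) ∧
        v = ∑ x, (a x * log (D x) + b x * log (1 - D x))} =
      ∑ x, (a x * log (a x / (a x + b x)) + b x * log (b x / (a x + b x))) := by
  set S := {v : ℝ | ∃ D : X → ℝ, (∀ x, D x ∈ Set.Ioo (0 : ℝ) 1) ∧
    v = ∑ x, (a x * log (D x) + b x * log (1 - D x))}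
  set M := ∑ x, (a x * log (a x / (a x + b x)) + b x * log (b x / (a x + b x)))
  have hupper : M ∈ upperBounds S := by
    rintro v ⟨D, hD, rfl⟩
    exact sum_le_sum fun x _ => mul_log_add_mul_log_one_sub_le (ha x) (hb x) (hD x)
  let value (t : ℝ) : ℝ := ∑ x, (a x * log ((a x + t) / (a x + b x + 2 * t)) +
    b x * log ((b x + t) / (b x + a x + 2 * t)))
  have hvalue_mem : ∀ t > 0, value t ∈ S := by
    intro t ht
    refine ⟨fun x => (a x + t) / (a x + b x + 2 * t), fun x => ?_, sum_congr rfl fun x _ => ?_⟩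
    · have := ha x
      have := hb x
      exact ⟨by positivity, (div_lt_one (by positivity)).mpr (by linarith)⟩
    · have hpos : 0 < a x + b x + 2 * t := by linarith [ha x, hb x]
      rw [one_sub_div hpos.ne']
      ring_nf
  have hvalue_tendsto : Tendsto value (𝓝[>] 0) (𝓝 M) := by
    refine tendsto_finsetSum _ fun x _ => ?_
    have h₁ := (continuousAt_mul_log_add_div (ha x) (hb x)).tendsto.mono_left
      (nhdsWithin_le_nhds (s := Set.Ioi 0))
    have h₂ := (continuousAt_mul_log_add_div (hb x) (ha x)).tendsto.mono_left
      (nhdsWithin_le_nhds (s := Set.Ioi 0))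
    simpa only [add_comm (b x) (a x), mul_zero, add_zero] using h₁.add h₂
  have hclosure := mem_closure_of_tendsto hvalue_tendsto
    (eventually_nhdsWithin_of_forall hvalue_mem)
  exact (isLUB_of_mem_closure hupper hclosure).csSup_eq (closure_nonempty_iff.mp ⟨_, hclosure⟩)

lemma klDiv'_add_div_two {X : Type*} [Fintype X] (p q : X → ℝ)
    (hp : ∀ x, 0 ≤ p x) (hq : ∀ x, 0 ≤ q x) :
    klDiv' p (fun x => (p x + q x) / 2) =
      ∑ x, p x * log (p x / (p x + q x)) + (∑ x, p x) * log 2 := by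
  rw [klDiv', sum_mul, ← sum_add_distrib]
  refine sum_congr rfl fun x _ => ?_
  rcases (hp x).eq_or_lt with hx | hx
  · simp [← hx]
  rw [div_div_eq_mul_div, mul_div_right_comm,
    log_mul (div_pos hx (by linarith [hq x])).ne' two_ne_zero, mul_add]

lemma two_mul_jsDiv {X : Type*} [Fintype X] (p q : X → ℝ)
    (hp : ∀ x, 0 ≤ p x) (hq : ∀ x, 0 ≤ q x) (hp1 : ∑ x, p x = 1) (hq1 : ∑ x, q x = 1) :
    2 * jsDiv p q =
      ∑ x, (p x * log (p x / (p x + q x)) + q x * log (q x / (p x + q x))) + 2 * log 2 := by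
  have hmix : (fun x => (p x + q x) / 2) = fun x => (q x + p x) / 2 := by
    simp only [add_comm]
  rw [jsDiv, klDiv'_add_div_two p q hp hq, hmix, klDiv'_add_div_two q p hq hp, hp1, hq1,
    sum_add_distrib]
  simp only [add_comm (q _) (p _)]
  ring

theorem psiStar_eq_jsd (X : Type*) [Fintype X] (ρ ρE : X → ℝ)
    (hρ : ∀ x, 0 ≤ ρ x) (hρE : ∀ x, 0 ≤ ρE x)
    (hρ1 : ∑ x, ρ x = 1) (hρE1 : ∑ x, ρE x = 1) :
    sSup {v : ℝ | ∃ D : X → ℝ, (∀ x, D x ∈ Set.Ioo (0 : ℝ) 1) ∧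
        v = ∑ x, (ρ x * Real.log (D x) + ρE x * Real.log (1 - D x))} =
      2 * jsDiv ρ ρE - 2 * Real.log 2 := by
  rw [sSup_sum_mul_log_add_mul_log_one_sub ρ ρE hρ hρE, two_mul_jsDiv ρ ρE hρ hρE hρ1 hρE1]
  ring
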